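/- Let d ∈ ℕ, p > 1, R ≥ 1 and set s_p = 2/(p−1). For every 𝐟 ∈ C^∞(closure(B^d_R))² and every μ = 0, 1, …, d, the commutation relation 𝐃_μ 𝐋_{d,p} 𝐟 = 𝐋_{d,p} 𝐃_μ 𝐟 − 𝐃_μ 𝐟 holds. -/

import Mathlib

/- STATEMENT 3: Commutation relation `𝐃_μ 𝐋_{d,p} 𝐟 = 𝐋_{d,p} 𝐃_μ 𝐟 − 𝐃_μ 𝐟` (Lemma 2.6). -/

open MeasureTheory Metric

noncomputable section

abbrev Euc (d : ℕ) := EuclideanSpace ℝ (Fin d)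

def pd {d : ℕ} (i : Fin d) (f : Euc d → ℂ) (x : Euc d) : ℂ :=
  fderiv ℝ f x (EuclideanSpace.single i 1)

def lap {d : ℕ} (f : Euc d → ℂ) (x : Euc d) : ℂ := ∑ i, pd i (pd i f) x

/-- The wave evolution operation `𝐋_{d,p}` with `sp = 2/(p-1)`. -/
def Lop (d : ℕ) (sp : ℝ) (f : (Euc d → ℂ) × (Euc d → ℂ)) : (Euc d → ℂ) × (Euc d → ℂ) :=
  (fun x => -(sp : ℂ) * f.1 x - fderiv ℝ f.1 x x + f.2 x,
   fun x => lap f.1 x - ((sp : ℂ) + 1) * f.2 x - fderiv ℝ f.2 x x)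

/-- The operators `𝐃_μ`, `μ = 0,1,…,d`: `𝐃_0 𝐟 = (f₂, Δf₁)` and `𝐃_i 𝐟 = (∂_i f₁, ∂_i f₂)`. -/
def Dop (d : ℕ) (μ : Fin (d + 1)) (f : (Euc d → ℂ) × (Euc d → ℂ)) :
    (Euc d → ℂ) × (Euc d → ℂ) :=
  Fin.cases (motive := fun _ => (Euc d → ℂ) × (Euc d → ℂ))
    (f.2, lap f.1) (fun i => (pd i f.1, pd i f.2)) μ

def SmoothPair (d : ℕ) (R : ℝ) (f : (Euc d → ℂ) × (Euc d → ℂ)) : Prop :=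
  ContDiffOn ℝ ((⊤ : ℕ∞) : WithTop ℕ∞) f.1 (closedBall (0 : Euc d) R) ∧
    ContDiffOn ℝ ((⊤ : ℕ∞) : WithTop ℕ∞) f.2 (closedBall (0 : Euc d) R)

section Helpers
open Filter
variable {d : ℕ} {F : Type*} [NormedAddCommGroup F] [NormedSpace ℝ F]
variable {f g : Euc d → ℂ} {x : Euc d} {i j : Fin d} {c : ℂ}

lemma one_le_T : (1 : WithTop ℕ∞) ≤ ((⊤ : ℕ∞) : WithTop ℕ∞) := by
  exact_mod_cast (le_top : (1 : ℕ∞) ≤ ⊤)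

lemma two_le_T : (2 : WithTop ℕ∞) ≤ ((⊤ : ℕ∞) : WithTop ℕ∞) := by
  have : ((2 : ℕ∞) : WithTop ℕ∞) ≤ ((⊤ : ℕ∞) : WithTop ℕ∞) := by
    exact_mod_cast (le_top : (2 : ℕ∞) ≤ ⊤)
  simpa using this

lemma top_add_one_le : ((⊤ : ℕ∞) : WithTop ℕ∞) + 1 ≤ ((⊤ : ℕ∞) : WithTop ℕ∞) := by simp

lemma dAt {h : Euc d → F} (hf : ContDiffAt ℝ (⊤ : ℕ∞) h x) : DifferentiableAt ℝ h x :=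
  hf.differentiableAt (lt_of_lt_of_le zero_lt_one one_le_T).ne'

lemma sm_fderiv {h : Euc d → F} (hf : ContDiffAt ℝ (⊤ : ℕ∞) h x) :
    ContDiffAt ℝ (⊤ : ℕ∞) (fderiv ℝ h) x :=
  hf.fderiv_right top_add_one_le

lemma sm_pd (hf : ContDiffAt ℝ (⊤ : ℕ∞) f x) : ContDiffAt ℝ (⊤ : ℕ∞) (pd i f) x :=
  (sm_fderiv hf).clm_apply contDiffAt_const

lemma sm_rad (hf : ContDiffAt ℝ (⊤ : ℕ∞) f x) :
    ContDiffAt ℝ (⊤ : ℕ∞) (fun y => fderiv ℝ f y y) x :=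
  (sm_fderiv hf).clm_apply contDiffAt_id

lemma sm_lap (hf : ContDiffAt ℝ (⊤ : ℕ∞) f x) : ContDiffAt ℝ (⊤ : ℕ∞) (lap f) x :=
  ContDiffAt.sum (fun i _ => sm_pd (sm_pd hf))

lemma fderiv_pd_eq (hf : ContDiffAt ℝ (⊤ : ℕ∞) f x) :
    fderiv ℝ (pd i f) x
      = (fderiv ℝ (fderiv ℝ f) x).flip (EuclideanSpace.single i 1) := by
  unfold pd
  rw [fderiv_clm_apply (dAt (sm_fderiv hf)) (differentiableAt_const _)]
  simp

lemma pd_pd_eq (hf : ContDiffAt ℝ (⊤ : ℕ∞) f x) :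
    pd i (pd j f) x = fderiv ℝ (fderiv ℝ f) x (EuclideanSpace.single i 1)
      (EuclideanSpace.single j 1) := by
  show fderiv ℝ (pd j f) x _ = _
  rw [fderiv_pd_eq hf]; rfl

lemma pd_comm (hf : ContDiffAt ℝ (⊤ : ℕ∞) f x) : pd i (pd j f) x = pd j (pd i f) x := by
  rw [pd_pd_eq hf, pd_pd_eq hf]
  exact hf.isSymmSndFDerivAt (by simpa using two_le_T) _ _

lemma pd_congr (h : f =ᶠ[nhds x] g) : pd i f x = pd i g x := by
  unfold pd; rw [h.fderiv_eq]

lemma pd_add (hf : DifferentiableAt ℝ f x) (hg : DifferentiableAt ℝ g x) :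
    pd i (fun y => f y + g y) x = pd i f x + pd i g x := by
  unfold pd; rw [fderiv_fun_add hf hg]; rfl

lemma pd_sub (hf : DifferentiableAt ℝ f x) (hg : DifferentiableAt ℝ g x) :
    pd i (fun y => f y - g y) x = pd i f x - pd i g x := by
  unfold pd; rw [fderiv_fun_sub hf hg]; rfl

lemma pd_const_mul (hf : DifferentiableAt ℝ f x) (c : ℂ) :
    pd i (fun y => c * f y) x = c * pd i f x := by
  unfold pd; rw [fderiv_const_mul hf]; rfl

lemma fderiv_rad_eq (hf : ContDiffAt ℝ (⊤ : ℕ∞) f x) :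
    fderiv ℝ (fun y => fderiv ℝ f y y) x
      = (fderiv ℝ f x) + (fderiv ℝ (fderiv ℝ f) x).flip x := by
  have h : (fun y => fderiv ℝ f y y) = fun y => (fderiv ℝ f y) (id y) := rfl
  rw [h, fderiv_clm_apply (dAt (sm_fderiv hf)) differentiableAt_id]
  simp [fderiv_id']

lemma pd_rad (hf : ContDiffAt ℝ (⊤ : ℕ∞) f x) :
    pd i (fun y => fderiv ℝ f y y) x = pd i f x + fderiv ℝ (pd i f) x x := by
  have hs := hf.isSymmSndFDerivAt (by simpa using two_le_T)
  have h1 : pd i (fun y => fderiv ℝ f y y) x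
      = pd i f x + fderiv ℝ (fderiv ℝ f) x (EuclideanSpace.single i 1) x := by
    show fderiv ℝ (fun y => fderiv ℝ f y y) x _ = _
    rw [fderiv_rad_eq hf]
    simp [pd]
  rw [h1, hs (EuclideanSpace.single i 1) x, fderiv_pd_eq hf]
  simp

section EV
variable (Hf : ∀ᶠ y in nhds x, ContDiffAt ℝ (⊤ : ℕ∞) f y)
variable (Hg : ∀ᶠ y in nhds x, ContDiffAt ℝ (⊤ : ℕ∞) g y)

include Hf

lemma pd_lap : pd i (lap f) x = lap (pd i f) x := by
  have hx := Hf.self_of_nhds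
  have hdiff : ∀ j ∈ Finset.univ, DifferentiableAt ℝ (fun y => pd j (pd j f) y) x :=
    fun j _ => dAt (sm_pd (sm_pd hx))
  have h1 : pd i (lap f) x = ∑ j, pd i (pd j (pd j f)) x := by
    show fderiv ℝ (fun y => ∑ j, pd j (pd j f) y) x _ = _
    rw [fderiv_fun_sum hdiff]
    simp only [ContinuousLinearMap.sum_apply]
    rfl
  rw [h1]
  unfold lap
  refine Finset.sum_congr rfl (fun j _ => ?_)
  rw [pd_comm (sm_pd hx)]
  refine pd_congr ?_
  filter_upwards [Hf] with y hy
  exact pd_comm hy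

lemma fderiv_lap_apply (v : Euc d) :
    fderiv ℝ (lap f) x v = ∑ j, fderiv ℝ (pd j (pd j f)) x v := by
  have hx := Hf.self_of_nhds
  have hdiff : ∀ j ∈ Finset.univ, DifferentiableAt ℝ (fun y => pd j (pd j f) y) x :=
    fun j _ => dAt (sm_pd (sm_pd hx))
  show fderiv ℝ (fun y => ∑ j, pd j (pd j f) y) x v = _
  rw [fderiv_fun_sum hdiff]
  simp

include Hg in
lemma lap_add : lap (fun y => f y + g y) x = lap f x + lap g x := by
  have hx := Hf.self_of_nhds
  have hgx := Hg.self_of_nhds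
  unfold lap
  rw [← Finset.sum_add_distrib]
  refine Finset.sum_congr rfl (fun i _ => ?_)
  have he : (pd i fun y => f y + g y) =ᶠ[nhds x] fun y => pd i f y + pd i g y := by
    filter_upwards [Hf, Hg] with y hy hy'
    exact pd_add (dAt hy) (dAt hy')
  rw [pd_congr he, pd_add (dAt (sm_pd hx)) (dAt (sm_pd hgx))]

include Hg in
lemma lap_sub : lap (fun y => f y - g y) x = lap f x - lap g x := by
  have hx := Hf.self_of_nhds
  have hgx := Hg.self_of_nhds
  unfold lap
  rw [← Finset.sum_sub_distrib]
  refine Finset.sum_congr rfl (fun i _ => ?_)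
  have he : (pd i fun y => f y - g y) =ᶠ[nhds x] fun y => pd i f y - pd i g y := by
    filter_upwards [Hf, Hg] with y hy hy'
    exact pd_sub (dAt hy) (dAt hy')
  rw [pd_congr he, pd_sub (dAt (sm_pd hx)) (dAt (sm_pd hgx))]

lemma lap_const_mul (c : ℂ) : lap (fun y => c * f y) x = c * lap f x := by
  have hx := Hf.self_of_nhds
  unfold lap
  rw [Finset.mul_sum]
  refine Finset.sum_congr rfl (fun i _ => ?_)
  have he : (pd i fun y => c * f y) =ᶠ[nhds x] fun y => c * pd i f y := by
    filter_upwards [Hf] with y hy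
    exact pd_const_mul (dAt hy) c
  rw [pd_congr he, pd_const_mul (dAt (sm_pd hx)) c]

lemma lap_rad : lap (fun y => fderiv ℝ f y y) x = 2 * lap f x + fderiv ℝ (lap f) x x := by
  have hx := Hf.self_of_nhds
  have key : ∀ i : Fin d, pd i (pd i (fun y => fderiv ℝ f y y)) x
      = 2 * pd i (pd i f) x + fderiv ℝ (pd i (pd i f)) x x := by
    intro i
    have he : (pd i fun y => fderiv ℝ f y y)
        =ᶠ[nhds x] fun y => pd i f y + fderiv ℝ (pd i f) y y := by
      filter_upwards [Hf] with y hy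
      exact pd_rad hy
    rw [pd_congr he, pd_add (dAt (sm_pd hx)) (dAt (sm_rad (sm_pd hx))),
      pd_rad (sm_pd hx)]
    ring
  show (∑ i, pd i (pd i (fun y => fderiv ℝ f y y)) x) = _
  rw [Finset.sum_congr rfl (fun i _ => key i), Finset.sum_add_distrib,
    ← Finset.mul_sum, fderiv_lap_apply Hf x]
  rfl

end EV
end Helpers

theorem Dmu_Lop_commutation (d : ℕ) (hd : 0 < d) (p : ℝ) (hp : 1 < p) (R : ℝ) (hR : 1 ≤ R)
    (f : (Euc d → ℂ) × (Euc d → ℂ)) (hf : SmoothPair d R f) (μ : Fin (d + 1)) :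
    ∀ x ∈ ball (0 : Euc d) R,
      (Dop d μ (Lop d (2 / (p - 1)) f)).1 x =
          (Lop d (2 / (p - 1)) (Dop d μ f)).1 x - (Dop d μ f).1 x ∧
      (Dop d μ (Lop d (2 / (p - 1)) f)).2 x =
          (Lop d (2 / (p - 1)) (Dop d μ f)).2 x - (Dop d μ f).2 x := by
  intro x hx
  set s : ℂ := ((2 / (p - 1) : ℝ) : ℂ) with hs
  have Hf1 : ∀ᶠ y in nhds x, ContDiffAt ℝ (⊤ : ℕ∞) f.1 y := by
    filter_upwards [isOpen_ball.mem_nhds hx] with y hy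
    exact hf.1.contDiffAt
      (Filter.mem_of_superset (isOpen_ball.mem_nhds hy) ball_subset_closedBall)
  have Hf2 : ∀ᶠ y in nhds x, ContDiffAt ℝ (⊤ : ℕ∞) f.2 y := by
    filter_upwards [isOpen_ball.mem_nhds hx] with y hy
    exact hf.2.contDiffAt
      (Filter.mem_of_superset (isOpen_ball.mem_nhds hy) ball_subset_closedBall)
  have h1x := Hf1.self_of_nhds
  have h2x := Hf2.self_of_nhds
  induction μ using Fin.cases with
  | zero =>
    constructor
    · simp only [Dop, Lop, Fin.cases_zero]
      ring
    · simp only [Dop, Lop, Fin.cases_zero]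
      -- LHS : lap (fun y => -s * f.1 y - fderiv ℝ f.1 y y + f.2 y) x
      have HA : ∀ᶠ y in nhds x, ContDiffAt ℝ (⊤ : ℕ∞)
          (fun y => -s * f.1 y - fderiv ℝ f.1 y y) y := by
        filter_upwards [Hf1] with y hy
        exact (contDiffAt_const.mul hy).sub (sm_rad hy)
      have e1 : lap (fun y => -s * f.1 y - fderiv ℝ f.1 y y + f.2 y) x
          = lap (fun y => -s * f.1 y - fderiv ℝ f.1 y y) x + lap f.2 x :=
        lap_add HA Hf2
      have e2 : lap (fun y => -s * f.1 y - fderiv ℝ f.1 y y) x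
          = lap (fun y => -s * f.1 y) x - lap (fun y => fderiv ℝ f.1 y y) x :=
        lap_sub (by filter_upwards [Hf1] with y hy; exact contDiffAt_const.mul hy)
          (by filter_upwards [Hf1] with y hy; exact sm_rad hy)
      have e3 : lap (fun y => -s * f.1 y) x = -s * lap f.1 x := lap_const_mul Hf1 (-s)
      have e4 := lap_rad Hf1
      rw [e1, e2, e3, e4]
      ring
  | succ i =>
    constructor
    · simp only [Dop, Lop, Fin.cases_succ]
      have e1 : pd i (fun y => -s * f.1 y - fderiv ℝ f.1 y y + f.2 y) x
          = pd i (fun y => -s * f.1 y - fderiv ℝ f.1 y y) x + pd i f.2 x :=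
        pd_add (((dAt h1x).const_mul (-s)).sub (dAt (sm_rad h1x))) (dAt h2x)
      have e2 : pd i (fun y => -s * f.1 y - fderiv ℝ f.1 y y) x
          = pd i (fun y => -s * f.1 y) x - pd i (fun y => fderiv ℝ f.1 y y) x :=
        pd_sub ((dAt h1x).const_mul (-s)) (dAt (sm_rad h1x))
      have e3 : pd i (fun y => -s * f.1 y) x = -s * pd i f.1 x :=
        pd_const_mul (dAt h1x) (-s)
      have e4 := pd_rad (i := i) h1x
      rw [e1, e2, e3, e4]
      ring
    · simp only [Dop, Lop, Fin.cases_succ]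
      have e1 : pd i (fun y => lap f.1 y - (s + 1) * f.2 y - fderiv ℝ f.2 y y) x
          = pd i (fun y => lap f.1 y - (s + 1) * f.2 y) x
            - pd i (fun y => fderiv ℝ f.2 y y) x :=
        pd_sub ((dAt (sm_lap h1x)).sub ((dAt h2x).const_mul (s + 1))) (dAt (sm_rad h2x))
      have e2 : pd i (fun y => lap f.1 y - (s + 1) * f.2 y) x
          = pd i (lap f.1) x - pd i (fun y => (s + 1) * f.2 y) x :=
        pd_sub (dAt (sm_lap h1x)) ((dAt h2x).const_mul (s + 1))
      have e3 : pd i (fun y => (s + 1) * f.2 y) x = (s + 1) * pd i f.2 x :=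
        pd_const_mul (dAt h2x) (s + 1)
      have e4 := pd_lap (i := i) Hf1
      have e5 := pd_rad (i := i) h2x
      rw [e1, e2, e3, e4, e5]
      ring
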